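/- arXiv:2507.00518 — 2 statements merged into one kernel-verified Lean document; each statement's English description precedes it below -/
import Mathlib

section
/- (Proposition 2, asymptotic behavior of Boltzmann exploration) For every d ≥ 2, κ ≥ 0 and V, A ∈ S^{d-1}, one has P_B-exp(a | n, d, V, κ) = P_0(a | n, d, V, κ) + o(1/(n√n)) as n → ∞. -/
open MeasureTheory Filter Asymptotics
open scoped InnerProductSpace ENNReal Topology

noncomputable section

/-- Euclidean space `ℝ^d`. -/
abbrev Esp (d : ℕ) := EuclideanSpace ℝ (Fin d)

/-- The unit hypersphere `S^{d-1} = {x ∈ ℝ^d : ‖x‖₂ = 1}`. -/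
abbrev Sph (d : ℕ) := Metric.sphere (0 : Esp d) 1

/-- The surface measure `σ` on the unit sphere `S^{d-1} ⊆ ℝ^d`. -/
def sphArea (d : ℕ) : Measure (Sph d) := (volume : Measure (Esp d)).toSphere

/-- The uniform distribution `U(S^{d-1}) = σ / A(S^{d-1})`. -/
def unifSph (d : ℕ) : Measure (Sph d) := (sphArea d Set.univ)⁻¹ • sphArea d

instance (d : ℕ) : IsFiniteMeasure (sphArea d) := by
  rw [sphArea]; infer_instance

instance (d : ℕ) : IsFiniteMeasure (unifSph d) := by
  constructor
  rw [unifSph, Measure.smul_apply, smul_eq_mul]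
  rcases eq_or_ne (sphArea d Set.univ) 0 with h | h
  · simp [h]
  · rw [ENNReal.inv_mul_cancel h (measure_ne_top _ _)]
    exact ENNReal.one_lt_top

/-- The joint law of `n` i.i.d. samples from the uniform distribution on `S^{d-1}`. -/
def iidUnif (d n : ℕ) : Measure (Fin n → Sph d) := Measure.pi fun _ => unifSph d

/-- The normalizing constant `C_d(κ)` of the von Mises-Fisher distribution
(defined using the mean direction `V`; it is independent of `V` by rotational invariance). -/
def vMFconst (d : ℕ) (κ : ℝ) (V : Sph d) : ℝ :=
  (∫ x : Sph d, Real.exp (κ * ⟪(V : Esp d), (x : Esp d)⟫_ℝ) ∂ sphArea d)⁻¹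

/-- The von Mises-Fisher density `f_vMF(x | V, κ) = C_d(κ) e^{κ⟨V,x⟩}`. -/
def fvMF (d : ℕ) (κ : ℝ) (V x : Sph d) : ℝ :=
  vMFconst d κ V * Real.exp (κ * ⟪(V : Esp d), (x : Esp d)⟫_ℝ)

/-- The Voronoï cell of `A` among `X_{n+1} = {X_1, …, X_n, A}`:
the set of points of the sphere at least as close (in inner product) to `A`
as to every `X_i`. -/
def Vor {d n : ℕ} (X : Fin n → Sph d) (A : Sph d) : Set (Sph d) :=
  {x | ∀ i, ⟪(x : Esp d), (X i : Esp d)⟫_ℝ ≤ ⟪(x : Esp d), (A : Esp d)⟫_ℝ}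

/-- `P_B-exp(a | n, d, V, κ) = E[e^{κ⟨V,A⟩} / (e^{κ⟨V,A⟩} + Σ_i e^{κ⟨V,X_i⟩})]`,
the expectation over `X_1, …, X_n` i.i.d. uniform on the sphere. -/
def PBexp (d : ℕ) (κ : ℝ) (V A : Sph d) (n : ℕ) : ℝ :=
  ∫ X : Fin n → Sph d,
    Real.exp (κ * ⟪(V : Esp d), (A : Esp d)⟫_ℝ) /
      (Real.exp (κ * ⟪(V : Esp d), (A : Esp d)⟫_ℝ)
        + ∑ i, Real.exp (κ * ⟪(V : Esp d), (X i : Esp d)⟫_ℝ)) ∂ iidUnif d n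

/-- `P_0(a | n, d, V, κ) = f_vMF(A | V, κ) · A(S^{d-1}) / n`. -/
def P0 (d : ℕ) (κ : ℝ) (V A : Sph d) (n : ℕ) : ℝ :=
  fvMF d κ V A * (sphArea d Set.univ).toReal / n


section AuxLemmas

lemma integrable_of_bdd {α : Type*} [MeasurableSpace α] {μ : Measure α} [IsFiniteMeasure μ]
    {f : α → ℝ} (hm : AEStronglyMeasurable f μ) {M : ℝ} (hM : ∀ x, |f x| ≤ M) :
    Integrable f μ :=
  (integrable_const M).mono' hm (Filter.Eventually.of_forall fun x => by
    simpa [Real.norm_eq_abs] using hM x)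

variable {E : Type*} [MeasureSpace E] [IsProbabilityMeasure (volume : Measure E)]

lemma integral_eval_pi {n : ℕ} (i : Fin n) (h : E → ℝ) :
    ∫ x : Fin n → E, h (x i) = ∫ x, h x := by
  have h1 : ∀ x : Fin n → E,
      (∏ k, (if k = i then h else fun _ => (1 : ℝ)) (x k)) = h (x i) := by
    intro x
    rw [Finset.prod_eq_single i]
    · simp
    · intro k _ hk; simp [hk]
    · simp
  have h2 : (∏ k : Fin n, ∫ y, (if k = i then h else fun _ => (1 : ℝ)) y) = ∫ y, h y := by
    rw [Finset.prod_eq_single i]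
    · simp
    · intro k _ hk; simp [hk]
    · simp
  calc ∫ x : Fin n → E, h (x i)
      = ∫ x : Fin n → E, ∏ k, (if k = i then h else fun _ => (1 : ℝ)) (x k) :=
        integral_congr_ae (.of_forall fun x => (h1 x).symm)
    _ = ∏ k : Fin n, ∫ y, (if k = i then h else fun _ => (1 : ℝ)) y :=
        MeasureTheory.integral_fintype_prod_eq_prod (𝕜 := ℝ) _
    _ = ∫ y, h y := h2

lemma integral_eval_mul_pi {n : ℕ} {i j : Fin n} (hij : i ≠ j) (h : E → ℝ) :
    ∫ x : Fin n → E, h (x i) * h (x j) = (∫ x, h x) * (∫ x, h x) := by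
  set F : Fin n → E → ℝ := fun k y => (if k = i then h y else 1) * (if k = j then h y else 1)
    with hF
  have h1 : ∀ x : Fin n → E, (∏ k, F k (x k)) = h (x i) * h (x j) := by
    intro x
    rw [hF]
    simp only
    rw [Finset.prod_mul_distrib]
    congr 1
    · rw [Finset.prod_eq_single i] <;> simp +contextual [Ne.symm]
    · rw [Finset.prod_eq_single j] <;> simp +contextual [Ne.symm]
  have h2 : ∀ k : Fin n, (∫ y, F k y)
      = (if k = i then ∫ y, h y else 1) * (if k = j then ∫ y, h y else 1) := by
    intro k
    by_cases hki : k = i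
    · subst hki
      simp [hF, hij]
    · by_cases hkj : k = j
      · subst hkj
        simp [hF, hki]
      · simp [hF, hki, hkj]
  have h3 : (∏ k : Fin n, ∫ y, F k y) = (∫ y, h y) * (∫ y, h y) := by
    rw [Finset.prod_congr rfl fun k _ => h2 k, Finset.prod_mul_distrib]
    congr 1
    · rw [Finset.prod_eq_single i] <;> simp +contextual
    · rw [Finset.prod_eq_single j] <;> simp +contextual
  calc ∫ x : Fin n → E, h (x i) * h (x j)
      = ∫ x : Fin n → E, ∏ k, F k (x k) :=
        integral_congr_ae (.of_forall fun x => (h1 x).symm)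
    _ = ∏ k : Fin n, ∫ y, F k y :=
        MeasureTheory.integral_fintype_prod_eq_prod (𝕜 := ℝ) _
    _ = (∫ y, h y) * (∫ y, h y) := h3

lemma integral_pi_sum (n : ℕ) {h : E → ℝ} (hm : Measurable h) {M : ℝ} (hM : ∀ x, |h x| ≤ M) :
    ∫ x : Fin n → E, (∑ i, h (x i)) = n * ∫ x, h x := by
  rw [integral_finset_sum]
  · simp only [integral_eval_pi]
    rw [Finset.sum_const, Finset.card_univ, Fintype.card_fin, nsmul_eq_mul]
  · exact fun i _ => integrable_of_bdd ((hm.comp (measurable_pi_apply i)).aestronglyMeasurable)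
      (fun x => hM (x i))

lemma integral_pi_sum_sq (n : ℕ) {h : E → ℝ} (hm : Measurable h) {M : ℝ} (hM : ∀ x, |h x| ≤ M)
    (h0 : ∫ x, h x = 0) :
    ∫ x : Fin n → E, (∑ i, h (x i)) ^ 2 = n * ∫ x, h x ^ 2 := by
  have hint : ∀ i j : Fin n, Integrable (fun x : Fin n → E => h (x i) * h (x j)) := by
    intro i j
    refine integrable_of_bdd (M := M * M)
      (((hm.comp (measurable_pi_apply i)).mul (hm.comp (measurable_pi_apply j))).aestronglyMeasurable)
      (fun x => ?_)
    rw [abs_mul]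
    exact mul_le_mul (hM (x i)) (hM (x j)) (abs_nonneg _)
      (le_trans (abs_nonneg (h (x i))) (hM (x i)))
  have hexp : ∀ x : Fin n → E, (∑ i, h (x i)) ^ 2 = ∑ i, ∑ j, h (x i) * h (x j) := by
    intro x
    rw [sq, Finset.sum_mul_sum]
  rw [integral_congr_ae (.of_forall hexp)]
  rw [integral_finset_sum _ (fun i _ => integrable_finset_sum _ (fun j _ => hint i j))]
  have hswap : ∀ i : Fin n, ∫ x : Fin n → E, ∑ j, h (x i) * h (x j)
      = ∑ j, ∫ x : Fin n → E, h (x i) * h (x j) :=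
    fun i => integral_finset_sum _ (fun j _ => hint i j)
  rw [Finset.sum_congr rfl fun i _ => hswap i]
  have hterm : ∀ i j : Fin n, (∫ x : Fin n → E, h (x i) * h (x j))
      = if i = j then ∫ y, h y ^ 2 else 0 := by
    intro i j
    by_cases hij : i = j
    · subst hij
      rw [if_pos rfl, ← integral_eval_pi i (fun y => h y ^ 2)]
      exact integral_congr_ae (.of_forall fun x => by ring)
    · rw [if_neg hij, integral_eval_mul_pi hij, h0, mul_zero]
  rw [Finset.sum_congr rfl fun i _ => Finset.sum_congr rfl fun j _ => hterm i j]
  simp [Finset.sum_ite_eq]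



lemma aux_sqrt_tendsto : Tendsto (fun n : ℕ => Real.sqrt n) atTop atTop := by
  have h := (tendsto_rpow_atTop (y := (1 : ℝ) / 2) (by norm_num)).comp
    (tendsto_natCast_atTop_atTop (R := ℝ))
  refine h.congr fun n => ?_
  simp [Function.comp, Real.rpow_natCast, Real.sqrt_eq_rpow]

lemma aux_sqrt_littleO :
    (fun n : ℕ => 1 / (n : ℝ) ^ 2) =o[atTop] fun n : ℕ => 1 / ((n : ℝ) * Real.sqrt n) := by
  have h3 : (fun n : ℕ => 1 / Real.sqrt n) =o[atTop] (fun _ : ℕ => (1 : ℝ)) := by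
    rw [isLittleO_one_iff]
    simpa [one_div, Pi.inv_def] using aux_sqrt_tendsto.inv_tendsto_atTop
  have h4 := h3.mul_isBigO
    (isBigO_refl (fun n : ℕ => 1 / ((n : ℝ) * Real.sqrt n)) atTop)
  refine h4.congr' (Filter.Eventually.of_forall fun n => ?_)
    (Filter.Eventually.of_forall fun n => by simp)
  have hn : (0 : ℝ) ≤ (n : ℝ) := Nat.cast_nonneg n
  show 1 / Real.sqrt n * (1 / ((n : ℝ) * Real.sqrt n)) = 1 / (n : ℝ) ^ 2
  rw [div_mul_div_comm, one_mul]
  congr 1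
  have hs := Real.mul_self_sqrt hn
  nlinarith [hs]

lemma aux_wrap {f : ℕ → ℝ} {K : ℝ} (hf : ∀ n : ℕ, 1 ≤ n → |f n| ≤ K / (n : ℝ) ^ 2) :
    f =o[atTop] fun n : ℕ => 1 / ((n : ℝ) * Real.sqrt n) := by
  have h1 : f =O[atTop] fun n : ℕ => 1 / (n : ℝ) ^ 2 := by
    rw [isBigO_iff]
    refine ⟨K, Filter.eventually_atTop.2 ⟨1, fun n hn => ?_⟩⟩
    have hn0 : (0 : ℝ) < (n : ℝ) := by exact_mod_cast hn
    rw [Real.norm_eq_abs, Real.norm_eq_abs]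
    calc |f n| ≤ K / (n : ℝ) ^ 2 := hf n hn
      _ = K * |1 / (n : ℝ) ^ 2| := by
          rw [abs_of_nonneg (by positivity)]; ring
  exact h1.trans_isLittleO aux_sqrt_littleO

set_option maxHeartbeats 1000000 in
/-- Proposition 2: asymptotic behavior of Boltzmann exploration:
`P_B-exp(a | n, d, V, κ) = P_0(a | n, d, V, κ) + o(1/(n√n))` as `n → ∞`. -/
theorem boltzmann_asymptotic (d : ℕ) (hd : 2 ≤ d) (κ : ℝ) (hκ : 0 ≤ κ) (V A : Sph d) :
    (fun n : ℕ => PBexp d κ V A n - P0 d κ V A n)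
      =o[atTop] fun n : ℕ => 1 / ((n : ℝ) * Real.sqrt n) := by
  classical
  set g : Sph d → ℝ := fun x => Real.exp (κ * ⟪(V : Esp d), (x : Esp d)⟫_ℝ) with hgdef
  set c : ℝ := Real.exp (κ * ⟪(V : Esp d), (A : Esp d)⟫_ℝ) with hcdef
  set a : ℝ := Real.exp (-κ) with hadef
  set b : ℝ := Real.exp κ with hbdef
  have hinner : ∀ x : Sph d, |⟪(V : Esp d), (x : Esp d)⟫_ℝ| ≤ 1 := by
    intro x
    have h1 : ‖(V : Esp d)‖ = 1 := mem_sphere_zero_iff_norm.mp V.2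
    have h2 : ‖(x : Esp d)‖ = 1 := mem_sphere_zero_iff_norm.mp x.2
    calc |⟪(V : Esp d), (x : Esp d)⟫_ℝ| ≤ ‖(V : Esp d)‖ * ‖(x : Esp d)‖ :=
          abs_real_inner_le_norm _ _
      _ = 1 := by rw [h1, h2, mul_one]
  have hga : ∀ x, a ≤ g x := by
    intro x
    rw [hgdef, hadef]
    apply Real.exp_le_exp.2
    have := (abs_le.mp (hinner x)).1
    nlinarith
  have hgb : ∀ x, g x ≤ b := by
    intro x
    rw [hgdef, hbdef]
    apply Real.exp_le_exp.2
    have := (abs_le.mp (hinner x)).2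
    nlinarith
  have ha : 0 < a := Real.exp_pos _
  have hb : 0 < b := Real.exp_pos _
  have hc : 0 < c := Real.exp_pos _
  have hgcont : Continuous g := by
    rw [hgdef]
    exact Real.continuous_exp.comp (continuous_const.mul
      (Continuous.inner continuous_const continuous_subtype_val))
  have hSfin : sphArea d Set.univ ≠ ⊤ := measure_ne_top _ _
  have hSpos : sphArea d Set.univ ≠ 0 := by
    rw [sphArea, Measure.toSphere_apply_univ]
    refine mul_ne_zero ?_ ?_
    · simp only [ne_eq, Nat.cast_eq_zero]
      rw [finrank_euclideanSpace_fin]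
      omega
    · exact (Metric.measure_ball_pos _ 0 one_pos).ne'
  have hprob : IsProbabilityMeasure (unifSph d) := by
    constructor
    rw [unifSph, Measure.smul_apply, smul_eq_mul, ENNReal.inv_mul_cancel hSpos hSfin]
  have hAtot : 0 < (sphArea d Set.univ).toReal := ENNReal.toReal_pos hSpos hSfin
  set Atot := (sphArea d Set.univ).toReal with hAdef
  letI : MeasureSpace (Sph d) := ⟨unifSph d⟩
  haveI hprob' : IsProbabilityMeasure (volume : Measure (Sph d)) := hprob
  have hgint : Integrable g (volume : Measure (Sph d)) :=
    integrable_of_bdd hgcont.aestronglyMeasurable (M := b)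
      (fun x => by rw [abs_of_pos (lt_of_lt_of_le ha (hga x))]; exact hgb x)
  set μv : ℝ := ∫ x : Sph d, g x with hμdef
  have hμa : a ≤ μv := by
    rw [hμdef]
    calc a = ∫ _x : Sph d, a := by simp
      _ ≤ ∫ x : Sph d, g x := integral_mono (integrable_const a) hgint hga
  have hμb : μv ≤ b := by
    rw [hμdef]
    calc ∫ x : Sph d, g x ≤ ∫ _x : Sph d, b := integral_mono hgint (integrable_const b) hgb
      _ = b := by simp
  have hμ : 0 < μv := lt_of_lt_of_le ha hμa
  set Iσ : ℝ := ∫ x : Sph d, g x ∂(sphArea d) with hIdef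
  have hμI : μv = Atot⁻¹ * Iσ := by
    rw [hμdef, hIdef]
    show ∫ x : Sph d, g x ∂(unifSph d) = _
    rw [unifSph, integral_smul_measure, smul_eq_mul, ENNReal.toReal_inv]
  have hIμ : Iσ = Atot * μv := by
    rw [hμI]
    field_simp
  have hP0 : ∀ n : ℕ, P0 d κ V A n = Iσ⁻¹ * c * Atot / n := fun n => rfl
  have hP0' : ∀ n : ℕ, 1 ≤ n → P0 d κ V A n = c / ((n : ℝ) * μv) := by
    intro n hn
    have hn0 : (0 : ℝ) < n := by exact_mod_cast hn
    rw [hP0 n, hIμ]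
    field_simp
  set K : ℝ := c ^ 2 / (a * μv) + c * (c * (b + μv) + b ^ 2) / (a * μv ^ 2) with hKdef
  have key : ∀ n : ℕ, 1 ≤ n →
      |PBexp d κ V A n - P0 d κ V A n| ≤ K / (n : ℝ) ^ 2 := by
    intro n hn
    have hn0 : (0 : ℝ) < n := by exact_mod_cast hn
    haveI : IsProbabilityMeasure (volume : Measure (Fin n → Sph d)) := by infer_instance
    set m : ℝ := (n : ℝ) * μv with hmdef
    have hm : 0 < m := by positivity
    have hna : (0 : ℝ) < (n : ℝ) * a := by positivity
    set S : (Fin n → Sph d) → ℝ := fun X => ∑ i, g (X i) with hSdef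
    have hScont : Continuous S := by
      rw [hSdef]
      exact continuous_finset_sum _ fun i _ => hgcont.comp (continuous_apply i)
    have hS0 : ∀ X, (n : ℝ) * a ≤ S X := by
      intro X
      rw [hSdef]
      calc (n : ℝ) * a = ∑ _i : Fin n, a := by
            rw [Finset.sum_const, Finset.card_univ, Fintype.card_fin, nsmul_eq_mul]
        _ ≤ ∑ i, g (X i) := Finset.sum_le_sum fun i _ => hga (X i)
    have hS1 : ∀ X, S X ≤ (n : ℝ) * b := by
      intro X
      rw [hSdef]
      calc ∑ i, g (X i) ≤ ∑ _i : Fin n, b := Finset.sum_le_sum fun i _ => hgb (X i)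
        _ = (n : ℝ) * b := by
            rw [Finset.sum_const, Finset.card_univ, Fintype.card_fin, nsmul_eq_mul]
    have hden : ∀ X, (n : ℝ) * a ≤ c + S X := fun X => by linarith [hS0 X, hc.le]
    have hdenpos : ∀ X, 0 < c + S X := fun X => lt_of_lt_of_le hna (hden X)
    have hPB : PBexp d κ V A n = ∫ X : Fin n → Sph d, c / (c + S X) := rfl
    clear_value K Iσ Atot μv g c a b m S
    set T : (Fin n → Sph d) → ℝ := fun X => S X - m with hTdef
    have hTcont : Continuous T := by
      rw [hTdef]; exact hScont.sub continuous_const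
    have hTsum : ∀ X, T X = ∑ i, (g (X i) - μv) := by
      intro X
      rw [hTdef, hSdef]
      simp only
      rw [Finset.sum_sub_distrib, Finset.sum_const, Finset.card_univ, Fintype.card_fin,
        nsmul_eq_mul, hmdef]
    have hhm : Measurable (fun x : Sph d => g x - μv) := hgcont.measurable.sub measurable_const
    have hhM : ∀ x : Sph d, |g x - μv| ≤ b := by
      intro x
      rw [abs_le]
      constructor
      · linarith [hga x, hμb, ha.le]
      · linarith [hgb x, hμ.le]
    have hh0 : ∫ x : Sph d, (g x - μv) = 0 := by
      rw [integral_sub hgint (integrable_const _)]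
      rw [← hμdef]
      simp
    have hT0 : ∫ X : Fin n → Sph d, T X = 0 := by
      rw [integral_congr_ae (Filter.Eventually.of_forall hTsum)]
      rw [integral_pi_sum n hhm hhM, hh0, mul_zero]
    have hT2 : ∫ X : Fin n → Sph d, T X ^ 2 ≤ (n : ℝ) * b ^ 2 := by
      have hsq := integral_pi_sum_sq n hhm hhM hh0
      have h2int : Integrable (fun x : Sph d => (g x - μv) ^ 2) :=
        integrable_of_bdd (((hgcont.sub continuous_const).pow 2).aestronglyMeasurable)
          (M := b ^ 2) (fun x => by
            have h := abs_le.mp (hhM x)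
            rw [abs_of_nonneg (sq_nonneg _)]
            nlinarith [h.1, h.2])
      calc ∫ X : Fin n → Sph d, T X ^ 2
          = ∫ X : Fin n → Sph d, (∑ i, (g (X i) - μv)) ^ 2 :=
            integral_congr_ae (Filter.Eventually.of_forall fun X =>
              congrArg (fun t : ℝ => t ^ 2) (hTsum X))
        _ = (n : ℝ) * ∫ x : Sph d, (g x - μv) ^ 2 := hsq
        _ ≤ (n : ℝ) * b ^ 2 := by
            have hle : ∫ x : Sph d, (g x - μv) ^ 2 ≤ b ^ 2 := by
              calc ∫ x : Sph d, (g x - μv) ^ 2 ≤ ∫ _x : Sph d, b ^ 2 :=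
                    integral_mono h2int (integrable_const _) (fun x => by
                      have h := abs_le.mp (hhM x)
                      nlinarith [h.1, h.2])
                _ = b ^ 2 := by simp
            nlinarith [hle]
    have hptT : ∀ X, |T X| ≤ (n : ℝ) * (b + μv) := by
      intro X
      rw [hTdef]
      simp only
      rw [abs_le]
      constructor
      · have := hS0 X
        rw [hmdef]
        nlinarith [hna.le, hb.le]
      · have := hS1 X
        rw [hmdef]
        nlinarith [hμ.le]
    have hTint : Integrable T :=
      integrable_of_bdd hTcont.aestronglyMeasurable (M := (n : ℝ) * (b + μv)) hptT
    have hT2int : Integrable (fun X : Fin n → Sph d => T X ^ 2) :=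
      integrable_of_bdd ((hTcont.pow 2).aestronglyMeasurable)
        (M := ((n : ℝ) * (b + μv)) ^ 2) (fun X => by
          have h := abs_le.mp (hptT X)
          rw [abs_of_nonneg (sq_nonneg _)]
          nlinarith [h.1, h.2])
    have hT1 : ∫ X : Fin n → Sph d, |T X| ≤ (n : ℝ) * (b + μv) := by
      calc ∫ X : Fin n → Sph d, |T X| ≤ ∫ _X : Fin n → Sph d, (n : ℝ) * (b + μv) :=
            integral_mono hTint.abs (integrable_const _) hptT
        _ = (n : ℝ) * (b + μv) := by simp
    set F : (Fin n → Sph d) → ℝ := fun X => c / (c + S X) with hFdef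
    have hFcont : Continuous F := by
      rw [hFdef]
      exact continuous_const.div (continuous_const.add hScont) (fun X => (hdenpos X).ne')
    have hFint : Integrable F :=
      integrable_of_bdd hFcont.aestronglyMeasurable (M := 1) (fun X => by
        rw [hFdef]
        simp only
        rw [abs_of_pos (div_pos hc (hdenpos X)), div_le_one (hdenpos X)]
        linarith [hS0 X, hna])
    set G : (Fin n → Sph d) → ℝ :=
      fun X => -(c ^ 2) / ((c + S X) * m) + c * T X * (c + T X) / ((c + S X) * m ^ 2) with hGdef
    have hGcont : Continuous G := by
      rw [hGdef]
      refine Continuous.add ?_ ?_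
      · exact continuous_const.div ((continuous_const.add hScont).mul continuous_const)
          (fun X => (mul_pos (hdenpos X) hm).ne')
      · exact ((continuous_const.mul hTcont).mul (continuous_const.add hTcont)).div
          ((continuous_const.add hScont).mul continuous_const)
          (fun X => (mul_pos (hdenpos X) (pow_pos hm 2)).ne')
    have hGbound : ∀ X, |G X| ≤ c ^ 2 / (((n : ℝ) * a) * m)
        + c * (c * |T X| + T X ^ 2) / (((n : ℝ) * a) * m ^ 2) := by
      intro X
      rw [hGdef]
      simp only
      refine le_trans (abs_add_le _ _) (add_le_add ?_ ?_)
      · rw [abs_div, abs_neg, abs_of_nonneg (sq_nonneg c),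
          abs_of_pos (mul_pos (hdenpos X) hm)]
        exact div_le_div_of_nonneg_left (sq_nonneg c) (mul_pos hna hm)
          (mul_le_mul_of_nonneg_right (hden X) hm.le)
      · rw [abs_div, abs_of_pos (mul_pos (hdenpos X) (pow_pos hm 2))]
        refine div_le_div₀ (by positivity) ?_ (mul_pos hna (pow_pos hm 2))
          (mul_le_mul_of_nonneg_right (hden X) (pow_pos hm 2).le)
        rw [abs_mul, abs_mul, abs_of_pos hc]
        have h1 : |c + T X| ≤ c + |T X| := by
          calc |c + T X| ≤ |c| + |T X| := abs_add_le _ _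
            _ = c + |T X| := by rw [abs_of_pos hc]
        calc c * |T X| * |c + T X| ≤ c * |T X| * (c + |T X|) :=
              mul_le_mul_of_nonneg_left h1 (by positivity)
          _ = c * (c * |T X| + T X ^ 2) := by
              have : |T X| * |T X| = T X ^ 2 := by rw [← abs_mul, abs_mul_self, sq]
              nlinarith [this]
    have hGint : Integrable G := by
      refine integrable_of_bdd hGcont.aestronglyMeasurable
        (M := c ^ 2 / (((n : ℝ) * a) * m)
          + c * (c * ((n : ℝ) * (b + μv)) + ((n : ℝ) * (b + μv)) ^ 2) / (((n : ℝ) * a) * m ^ 2))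
        (fun X => le_trans (hGbound X) ?_)
      have h := abs_le.mp (hptT X)
      have hsq : T X ^ 2 ≤ ((n : ℝ) * (b + μv)) ^ 2 := by nlinarith [h.1, h.2]
      have habs : |T X| ≤ (n : ℝ) * (b + μv) := hptT X
      refine add_le_add le_rfl ?_
      refine (div_le_div_iff_of_pos_right (mul_pos hna (pow_pos hm 2))).2 ?_
      exact mul_le_mul_of_nonneg_left
        (add_le_add (mul_le_mul_of_nonneg_left habs hc.le) hsq) hc.le
    have hpt : ∀ X, F X - c / m = G X - (c / m ^ 2) * T X := by
      intro X
      have h1 : c + S X ≠ 0 := (hdenpos X).ne'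
      have h2 : m ≠ 0 := hm.ne'
      rw [hFdef, hGdef, hTdef]
      simp only
      field_simp
      ring
    have hPBm : PBexp d κ V A n - P0 d κ V A n = ∫ X : Fin n → Sph d, (F X - c / m) := by
      rw [hPB, hP0' n hn, ← hmdef]
      rw [integral_sub hFint (integrable_const _), integral_const]
      simp [measure_univ]
    have hsub : ∫ X : Fin n → Sph d, (F X - c / m) = ∫ X : Fin n → Sph d, G X := by
      rw [integral_congr_ae (Filter.Eventually.of_forall hpt)]
      rw [integral_sub hGint (hTint.const_mul _), integral_const_mul, hT0, mul_zero, sub_zero]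
    rw [hPBm, hsub]
    have hrhs_int : Integrable (fun X : Fin n → Sph d =>
        c ^ 2 / (((n : ℝ) * a) * m) + c * (c * |T X| + T X ^ 2) / (((n : ℝ) * a) * m ^ 2)) := by
      apply Integrable.add (integrable_const _)
      have : (fun X : Fin n → Sph d => c * (c * |T X| + T X ^ 2) / (((n : ℝ) * a) * m ^ 2))
          = fun X => (c / (((n : ℝ) * a) * m ^ 2)) * (c * |T X| + T X ^ 2) := by
        funext X; ring
      rw [this]
      exact (((hTint.abs.const_mul c).add hT2int).const_mul _)
    have hstep : ∫ X : Fin n → Sph d, |G X|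
        ≤ c ^ 2 / (((n : ℝ) * a) * m)
          + c * (c * ((n : ℝ) * (b + μv)) + (n : ℝ) * b ^ 2) / (((n : ℝ) * a) * m ^ 2) := by
      have hmono : ∫ X : Fin n → Sph d, |G X| ≤ ∫ X : Fin n → Sph d,
          (c ^ 2 / (((n : ℝ) * a) * m) + c * (c * |T X| + T X ^ 2) / (((n : ℝ) * a) * m ^ 2)) :=
        integral_mono hGint.abs hrhs_int hGbound
      refine le_trans hmono ?_
      have hcalc : ∫ X : Fin n → Sph d,
          (c ^ 2 / (((n : ℝ) * a) * m) + c * (c * |T X| + T X ^ 2) / (((n : ℝ) * a) * m ^ 2))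
          = c ^ 2 / (((n : ℝ) * a) * m)
            + (c * (∫ X : Fin n → Sph d, |T X|) * c + c * ∫ X : Fin n → Sph d, T X ^ 2)
              / (((n : ℝ) * a) * m ^ 2) := by
        have heq : (fun X : Fin n → Sph d =>
            c ^ 2 / (((n : ℝ) * a) * m) + c * (c * |T X| + T X ^ 2) / (((n : ℝ) * a) * m ^ 2))
            = fun X => c ^ 2 / (((n : ℝ) * a) * m)
              + ((c * c / (((n : ℝ) * a) * m ^ 2)) * |T X|
                + (c / (((n : ℝ) * a) * m ^ 2)) * T X ^ 2) := by
          funext X; ring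
        have i1 : Integrable (fun X : Fin n → Sph d =>
            (c * c / (((n : ℝ) * a) * m ^ 2)) * |T X|) := hTint.abs.const_mul _
        have i2 : Integrable (fun X : Fin n → Sph d =>
            (c / (((n : ℝ) * a) * m ^ 2)) * T X ^ 2) := hT2int.const_mul _
        have i12 : Integrable (fun X : Fin n → Sph d =>
            (c * c / (((n : ℝ) * a) * m ^ 2)) * |T X|
              + (c / (((n : ℝ) * a) * m ^ 2)) * T X ^ 2) := i1.add i2
        rw [heq, integral_add (integrable_const _) i12, integral_add i1 i2,
          integral_const_mul, integral_const_mul, integral_const]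
        simp [measure_univ]
        ring
      rw [hcalc]
      refine add_le_add le_rfl ?_
      refine (div_le_div_iff_of_pos_right (mul_pos hna (pow_pos hm 2))).2 ?_
      have e1 := mul_le_mul_of_nonneg_left hT1 (mul_pos hc hc).le
      have e2 := mul_le_mul_of_nonneg_left hT2 hc.le
      nlinarith [e1, e2]
    have hfinal : c ^ 2 / (((n : ℝ) * a) * m)
        + c * (c * ((n : ℝ) * (b + μv)) + (n : ℝ) * b ^ 2) / (((n : ℝ) * a) * m ^ 2)
        = K / (n : ℝ) ^ 2 := by
      have hne1 : ((n : ℝ) * a) * ((n : ℝ) * μv) ≠ 0 := (mul_pos hna (by positivity)).ne'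
      have hne2 : ((n : ℝ) * a) * ((n : ℝ) * μv) ^ 2 ≠ 0 :=
        (mul_pos hna (pow_pos (by positivity) 2)).ne'
      have hne3 : a * μv ≠ 0 := (mul_pos ha hμ).ne'
      have hne4 : a * μv ^ 2 ≠ 0 := (mul_pos ha (pow_pos hμ 2)).ne'
      have hne5 : ((n : ℝ) ^ 2 : ℝ) ≠ 0 := (pow_pos hn0 2).ne'
      rw [hmdef, hKdef, div_add_div _ _ hne1 hne2, div_add_div _ _ hne3 hne4, div_div,
        div_eq_div_iff (mul_ne_zero hne1 hne2) (mul_ne_zero (mul_ne_zero hne3 hne4) hne5)]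
      ring
    calc |∫ X : Fin n → Sph d, G X| ≤ ∫ X : Fin n → Sph d, |G X| := by
          simpa [Real.norm_eq_abs] using
            norm_integral_le_integral_norm (μ := (volume : Measure (Fin n → Sph d))) G
      _ ≤ _ := hstep
      _ = K / (n : ℝ) ^ 2 := hfinal
  exact aux_wrap key
end AuxLemmas
end
end

section
/- (Lemma B.2, the expected normal vector of the Voronoï cell is collinear with A) For every integer d ≥ 2, A ∈ S^{d-1} and n ∈ ℕ*, there exists λ ∈ ℝ such that E_{X_1,…,X_n i.i.d. ~ U(S^{d-1})}[∫_{Vor(A | X_{n+1})} x dσ(x)] = λ A, where the integral is the vector-valued integral in ℝ^d. -/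
open MeasureTheory Filter Asymptotics
open scoped InnerProductSpace ENNReal Topology

noncomputable section

/- ### Auxiliary material for the proof of Lemma B.2 -/

open scoped Pointwise

namespace ExpAux

variable {d n : ℕ}

/-- The self-map of the unit sphere induced by a linear isometry of `ℝ^d`. -/
def sMap (e : Esp d ≃ₗᵢ[ℝ] Esp d) (x : Sph d) : Sph d :=
  ⟨e x, by
    rw [mem_sphere_zero_iff_norm, e.norm_map]
    exact norm_eq_of_mem_sphere x⟩

lemma sMap_coe (e : Esp d ≃ₗᵢ[ℝ] Esp d) (x : Sph d) : (sMap e x : Esp d) = e x := rfl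

/-- `sMap` as a homeomorphism. -/
def sHomeo (e : Esp d ≃ₗᵢ[ℝ] Esp d) : Sph d ≃ₜ Sph d :=
  { toFun := sMap e
    invFun := sMap e.symm
    left_inv := fun x => by ext; simp [sMap]
    right_inv := fun x => by ext; simp [sMap]
    continuous_toFun := Continuous.subtype_mk (e.continuous.comp continuous_subtype_val) _
    continuous_invFun := Continuous.subtype_mk (e.symm.continuous.comp continuous_subtype_val) _ }

lemma sMap_measurable (e : Esp d ≃ₗᵢ[ℝ] Esp d) : Measurable (sMap e) :=
  (sHomeo e).continuous.measurable

lemma vol_preimage (e : Esp d ≃ₗᵢ[ℝ] Esp d) (S : Set (Esp d)) :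
    volume (⇑e ⁻¹' S) = volume S := by
  have h : (volume : Measure (Esp d)).map e.toHomeomorph.toMeasurableEquiv = volume :=
    e.measurePreserving.map_eq
  calc volume (⇑e ⁻¹' S)
      = volume (e.toHomeomorph.toMeasurableEquiv ⁻¹' S) := rfl
    _ = ((volume : Measure (Esp d)).map e.toHomeomorph.toMeasurableEquiv) S :=
        (MeasurableEquiv.map_apply _ _).symm
    _ = volume S := by rw [h]

/-- The surface measure of the sphere is invariant under linear isometries. -/
lemma map_sphArea (e : Esp d ≃ₗᵢ[ℝ] Esp d) :
    (sphArea d).map (sMap e) = sphArea d := by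
  ext s hs
  have hps : MeasurableSet (sMap e ⁻¹' s) := sMap_measurable e hs
  rw [Measure.map_apply (sMap_measurable e) hs]
  rw [sphArea, Measure.toSphere_apply' _ hps, Measure.toSphere_apply' _ hs]
  congr 1
  have himg : (Subtype.val '' (sMap e ⁻¹' s) : Set (Esp d)) = ⇑e ⁻¹' (Subtype.val '' s) := by
    ext y
    constructor
    · rintro ⟨x, hx, rfl⟩
      exact ⟨sMap e x, hx, rfl⟩
    · rintro ⟨z, hz, hez⟩
      have hy : y ∈ Metric.sphere (0 : Esp d) 1 := by
        have h1 : ‖e y‖ = 1 := by rw [← hez]; exact norm_eq_of_mem_sphere z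
        rw [mem_sphere_zero_iff_norm]
        simpa using h1
      refine ⟨⟨y, hy⟩, ?_, rfl⟩
      show sMap e ⟨y, hy⟩ ∈ s
      have : sMap e ⟨y, hy⟩ = z := Subtype.ext hez.symm
      rwa [this]
  rw [himg]
  have hsmul : Set.Ioo (0:ℝ) 1 • (⇑e ⁻¹' (Subtype.val '' s))
      = ⇑e ⁻¹' (Set.Ioo (0:ℝ) 1 • (Subtype.val '' s)) := by
    ext x
    constructor
    · rintro ⟨r, hr, y, hy, rfl⟩
      exact ⟨r, hr, e y, hy, by simp⟩
    · rintro ⟨r, hr, t, ht, hrt⟩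
      refine ⟨r, hr, e.symm t, by simpa using ht, ?_⟩
      apply e.injective
      simp [hrt]
  rw [hsmul, vol_preimage]

lemma map_unifSph (e : Esp d ≃ₗᵢ[ℝ] Esp d) :
    (unifSph d).map (sMap e) = unifSph d := by
  rw [unifSph, Measure.map_smul, map_sphArea]

lemma sMap_measurePreserving (e : Esp d ≃ₗᵢ[ℝ] Esp d) :
    MeasurePreserving (sMap e) (unifSph d) (unifSph d) :=
  ⟨sMap_measurable e, map_unifSph e⟩

lemma vor_measurableSet (X : Fin n → Sph d) (A : Sph d) : MeasurableSet (Vor X A) := by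
  have hcl : IsClosed (Vor X A) := by
    have heq : Vor X A =
        ⋂ i, {x : Sph d | ⟪(x : Esp d), (X i : Esp d)⟫_ℝ ≤ ⟪(x : Esp d), (A : Esp d)⟫_ℝ} := by
      ext x; simp [Vor]
    rw [heq]
    exact isClosed_iInter fun i => isClosed_le
      (Continuous.inner continuous_subtype_val continuous_const)
      (Continuous.inner continuous_subtype_val continuous_const)
  exact hcl.measurableSet

lemma vor_image (e : Esp d ≃ₗᵢ[ℝ] Esp d) (X : Fin n → Sph d) (A : Sph d) :
    Vor (fun i => sMap e (X i)) (sMap e A) = sMap e '' Vor X A := by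
  have himg : sMap e '' Vor X A = sMap e.symm ⁻¹' Vor X A :=
    Equiv.image_eq_preimage_symm (sHomeo e).toEquiv (Vor X A)
  ext x
  have hkey : ∀ v : Esp d, ⟪(x : Esp d), e v⟫_ℝ = ⟪e.symm (x : Esp d), v⟫_ℝ := by
    intro v
    conv_lhs => rw [← e.apply_symm_apply (x : Esp d)]
    exact e.inner_map_map _ _
  rw [himg]
  simp only [Vor, Set.mem_setOf_eq, Set.mem_preimage, sMap_coe, hkey]

lemma integral_vor (e : Esp d ≃ₗᵢ[ℝ] Esp d) (X : Fin n → Sph d) (A : Sph d) :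
    (∫ x in Vor (fun i => sMap e (X i)) (sMap e A), (x : Esp d) ∂ sphArea d)
      = e (∫ x in Vor X A, (x : Esp d) ∂ sphArea d) := by
  rw [vor_image]
  have himg : sMap e '' Vor X A = sMap e.symm ⁻¹' Vor X A :=
    Equiv.image_eq_preimage_symm (sHomeo e).toEquiv (Vor X A)
  have hV : MeasurableSet (sMap e '' Vor X A) := by
    rw [himg]
    exact sMap_measurable e.symm (vor_measurableSet X A)
  have hpre : sMap e ⁻¹' (sMap e '' Vor X A) = Vor X A :=
    (sHomeo e).toEquiv.preimage_image (Vor X A)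
  have hres : (sphArea d).restrict (sMap e '' Vor X A)
      = ((sphArea d).restrict (Vor X A)).map (sMap e) := by
    conv_lhs => rw [← map_sphArea e]
    rw [Measure.restrict_map (sMap_measurable e) hV, hpre]
  rw [hres, integral_map (sMap_measurable e).aemeasurable
      continuous_subtype_val.aestronglyMeasurable]
  simp only [sMap_coe]
  exact e.toLinearIsometry.integral_comp_comm fun x : Sph d => (x : Esp d)

end ExpAux

open ExpAux

/-- Lemma B.2: the expected (vector-valued) normal vector of the Voronoï cell of `A`,
`E[∫_{Vor(A | X_{n+1})} x dσ(x)]`, is collinear with `A`. -/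
theorem expected_normal_collinear (d : ℕ) (hd : 2 ≤ d) (A : Sph d) (n : ℕ) (hn : 0 < n) :
    ∃ lam : ℝ,
      (∫ X : Fin n → Sph d, (∫ x in Vor X A, (x : Esp d) ∂ sphArea d) ∂ iidUnif d n)
        = lam • (A : Esp d) := by
  set I : (Fin n → Sph d) → Esp d := fun X => ∫ x in Vor X A, (x : Esp d) ∂ sphArea d with hI
  set E0 : Esp d := ∫ X : Fin n → Sph d, I X ∂ iidUnif d n with hE0
  have key : ∀ e : Esp d ≃ₗᵢ[ℝ] Esp d, e (A : Esp d) = (A : Esp d) → e E0 = E0 := by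
    intro e hA
    have hAe : sMap e A = A := Subtype.ext hA
    have hmp : MeasurePreserving (fun X : Fin n → Sph d => fun i => sMap e (X i))
        (iidUnif d n) (iidUnif d n) := by
      rw [iidUnif]
      exact measurePreserving_pi _ _ fun _ => sMap_measurePreserving e
    have hemb : MeasurableEmbedding (fun X : Fin n → Sph d => fun i => sMap e (X i)) := by
      have hfun : (fun X : Fin n → Sph d => fun i => sMap e (X i))
          = ⇑(MeasurableEquiv.piCongrRight fun _ : Fin n => (sHomeo e).toMeasurableEquiv) := rfl
      rw [hfun]
      exact MeasurableEquiv.measurableEmbedding _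
    calc e E0 = ∫ X : Fin n → Sph d, e (I X) ∂ iidUnif d n :=
          (e.toLinearIsometry.integral_comp_comm I).symm
      _ = ∫ X : Fin n → Sph d, I (fun i => sMap e (X i)) ∂ iidUnif d n := by
          refine integral_congr_ae (Filter.Eventually.of_forall fun X => ?_)
          rw [hI]
          simp only
          rw [← integral_vor e X A, hAe]
      _ = E0 := hmp.integral_comp hemb I
  set c : ℝ := ⟪(A : Esp d), E0⟫_ℝ with hc
  set w : Esp d := E0 - c • (A : Esp d) with hw
  have hwA : ⟪w, (A : Esp d)⟫_ℝ = 0 := by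
    rw [hw, inner_sub_left, real_inner_smul_left, real_inner_self_eq_norm_sq,
      norm_eq_of_mem_sphere A, real_inner_comm]
    rw [hc]; ring
  have hAmem : (A : Esp d) ∈ (ℝ ∙ w)ᗮ :=
    Submodule.mem_orthogonal_singleton_iff_inner_right.mpr hwA
  have hE0' : E0 = c • (A : Esp d) + w := by rw [hw]; abel
  have hrefl : Submodule.reflection (ℝ ∙ w)ᗮ E0 = E0 :=
    key (Submodule.reflection (ℝ ∙ w)ᗮ) (Submodule.reflection_mem_subspace_eq_self hAmem)
  have hneg : Submodule.reflection (ℝ ∙ w)ᗮ w = -w := Submodule.reflection_orthogonalComplement_singleton_eq_neg w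
  have hcmp : c • (A : Esp d) + -w = c • (A : Esp d) + w := by
    calc c • (A : Esp d) + -w
        = Submodule.reflection (ℝ ∙ w)ᗮ (c • (A : Esp d) + w) := by
          rw [map_add, LinearIsometryEquiv.map_smul, Submodule.reflection_mem_subspace_eq_self hAmem, hneg]
      _ = Submodule.reflection (ℝ ∙ w)ᗮ E0 := by rw [← hE0']
      _ = E0 := hrefl
      _ = c • (A : Esp d) + w := hE0'
  have hw0 : w = 0 := by
    have h1 : -w = w := add_left_cancel hcmp
    have h2 : w + w = 0 := by nth_rewrite 1 [← h1]; exact neg_add_cancel w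
    have h3 : (2 : ℝ) • w = 0 := by rw [two_smul]; exact h2
    rcases smul_eq_zero.mp h3 with h | h
    · norm_num at h
    · exact h
  exact ⟨c, by rw [hE0', hw0, add_zero]⟩
end
end
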